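/- Let M ∈ ℕ, let 𝒢 = (G_1, …, G_G) be a partition of Fin M into G nonempty pairwise disjoint groups whose union is Fin M, and let v : Finset (Fin M) → ℝ be a set function. Suppose two groups G_i and G_j (i ≠ j) contribute symmetrically, i.e., v((⋃_{k∈𝒯} G_k) ∪ G_i) = v((⋃_{k∈𝒯} G_k) ∪ G_j) for every sub-collection 𝒯 ⊆ {1,…,G} \ {i, j}. Then their groupShapley values are equal: φ_{G_i} = φ_{G_j}. (Symmetry property of groupShapley.) -/

import Mathlib

/-!
Split the coalitions entering `φ_{G_i}` by whether they contain `G_j`, and those entering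
`φ_{G_j}` by whether they contain `G_i`. Both values become sums over the coalitions `S`
avoiding both groups, and the symmetry hypothesis matches them term by term: it equates
`v(S ∪ G_i)` with `v(S ∪ G_j)`, while `S ∪ G_j ∪ G_i = S ∪ G_i ∪ G_j`.
-/

open Finset

/-- The groupShapley value of group `G i` for contribution function `v` and
partition `G` of the features into `Gn` groups. -/
noncomputable def groupShapley {M Gn : ℕ} (G : Fin Gn → Finset (Fin M))
    (v : Finset (Fin M) → ℝ) (i : Fin Gn) : ℝ :=
  ∑ T ∈ (Finset.univ.erase i).powerset,
    ((T.card.factorial * (Gn - T.card - 1).factorial : ℕ) : ℝ) / (Gn.factorial : ℕ) *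
      (v (T.biUnion G ∪ G i) - v (T.biUnion G))

noncomputable def shapleyWeight (n k : ℕ) : ℝ :=
  ((k.factorial * (n - k - 1).factorial : ℕ) : ℝ) / (n.factorial : ℕ)

theorem groupShapley_eq_sum_powerset_erase_erase {M Gn : ℕ} (G : Fin Gn → Finset (Fin M))
    (v : Finset (Fin M) → ℝ) {i j : Fin Gn} (hij : i ≠ j) :
    groupShapley G v i = ∑ S ∈ ((univ.erase i).erase j).powerset,
      (shapleyWeight Gn #S * (v (S.biUnion G ∪ G i) - v (S.biUnion G)) +
        shapleyWeight Gn (#S + 1) *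
          (v (S.biUnion G ∪ G j ∪ G i) - v (S.biUnion G ∪ G j))) := by
  have hj : j ∉ (univ.erase i).erase j := notMem_erase _ _
  conv_lhs => rw [groupShapley, ← insert_erase (mem_erase.2 ⟨hij.symm, mem_univ j⟩)]
  rw [sum_powerset_insert hj, ← sum_add_distrib]
  refine sum_congr rfl fun S hS => ?_
  have hjS : j ∉ S := fun h => hj (mem_powerset.1 hS h)
  rw [card_insert_of_notMem hjS, biUnion_insert, union_comm (G j)]
  rfl

theorem groupShapley_symmetry_general
    (M Gn : ℕ) (G : Fin Gn → Finset (Fin M))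
    (v : Finset (Fin M) → ℝ) (i j : Fin Gn) (hij : i ≠ j)
    (hsym : ∀ T : Finset (Fin Gn), T ⊆ (Finset.univ.erase i).erase j →
      v (T.biUnion G ∪ G i) = v (T.biUnion G ∪ G j)) :
    groupShapley G v i = groupShapley G v j := by
  rw [groupShapley_eq_sum_powerset_erase_erase G v hij,
    groupShapley_eq_sum_powerset_erase_erase G v hij.symm, erase_right_comm (a := j)]
  refine sum_congr rfl fun S hS => ?_
  rw [hsym S (mem_powerset.1 hS), union_right_comm _ (G i)]

/-- Symmetry property of groupShapley: two groups that contribute symmetrically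
have equal groupShapley values. -/
theorem groupShapley_symmetry
    (M Gn : ℕ) (G : Fin Gn → Finset (Fin M))
    (hne : ∀ i, (G i).Nonempty)
    (hdisj : ∀ i j : Fin Gn, i ≠ j → Disjoint (G i) (G j))
    (hcover : Finset.univ.biUnion G = (Finset.univ : Finset (Fin M)))
    (v : Finset (Fin M) → ℝ) (i j : Fin Gn) (hij : i ≠ j)
    (hsym : ∀ T : Finset (Fin Gn), T ⊆ (Finset.univ.erase i).erase j →
      v (T.biUnion G ∪ G i) = v (T.biUnion G ∪ G j)) :
    groupShapley G v i = groupShapley G v j :=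
  groupShapley_symmetry_general M Gn G v i j hij hsym
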